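/- Let α > 1 and β > 0 with 1 + β − α < 1, let ξ_i be i.i.d. Pareto with P(ξ_1 > t) = t^{−α} for t ≥ 1, T_n = Σ_{i=1}^n ξ_i, N(t) = max{n : T_n ≤ t}, τ(t) = N(t)+1, and Z(t) = ξ_{τ(t)}^β · 1{t ≥ T_{N(t)} + 1}. Then Z has regenerative increments over T_n with Z(T_n) = 0 for all n (hence a = 0), and there exists c > 0 such that E[Z(t)] > c·t^{1+β−α} for all t ≥ 1; in particular E[Z(t)] = o(t^r) fails for r = 1 + β − α. -/

import Mathlib

open MeasureTheory ProbabilityTheory Filter Set Topology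
open scoped ENNReal NNReal

noncomputable section

variable {Ω : Type*} [MeasurableSpace Ω]

/-- The renewal times `T n = ξ 1 + ⋯ + ξ n` (here `ξ i` in Lean is `ξ_{i+1}` in math). -/
def rT (ξ : ℕ → Ω → ℝ) (n : ℕ) (ω : Ω) : ℝ := ∑ i ∈ Finset.range n, ξ i ω

/-- `N(t) = max {n : T n ≤ t}`. -/
def rN (ξ : ℕ → Ω → ℝ) (t : ℝ) (ω : Ω) : ℕ := sSup {n : ℕ | rT ξ n ω ≤ t}

/-- The `n`-th regenerative increment `ζ_{n+1} = (ξ_{n+1}, (Z(t + T_n) - Z(T_n))_{0 ≤ t ≤ ξ_{n+1}})`,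
the path being stopped at `ξ_{n+1}`. -/
def rIncr (ξ : ℕ → Ω → ℝ) (Z : ℝ → Ω → ℝ) (n : ℕ) (ω : Ω) : ℝ × (ℝ → ℝ) :=
  (ξ n ω, fun s => Z (min (max s 0) (ξ n ω) + rT ξ n ω) ω - Z (rT ξ n ω) ω)

/-- `M_{n+1} = sup_{T_n ≤ s ≤ T_{n+1}} |Z(s) - Z(T_n)|`, as an extended real. -/
def rM (ξ : ℕ → Ω → ℝ) (Z : ℝ → Ω → ℝ) (n : ℕ) (ω : Ω) : ℝ≥0∞ :=
  ⨆ s ∈ Set.Icc (rT ξ n ω) (rT ξ (n + 1) ω), ENNReal.ofReal |Z s ω - Z (rT ξ n ω) ω|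

/-- `Z` is a càdlàg process with `Z(0) = 0` having regenerative increments over the
renewal times `T n` built from the positive interarrival times `ξ`. -/
def RegenIncrements (μ : Measure Ω) (ξ : ℕ → Ω → ℝ) (Z : ℝ → Ω → ℝ) : Prop :=
  (∀ n ω, 0 < ξ n ω) ∧
  (∀ ω, Z 0 ω = 0) ∧
  (∀ ω t, ContinuousWithinAt (fun s => Z s ω) (Set.Ici t) t) ∧
  (∀ ω t, 0 < t → ∃ l : ℝ, Filter.Tendsto (fun s => Z s ω) (nhdsWithin t (Set.Iio t)) (nhds l)) ∧
  iIndepFun (rIncr ξ Z) μ ∧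
  (∀ n, IdentDistrib (rIncr ξ Z n) (rIncr ξ Z 0) μ μ)

/-!
If some cycle starts by time `t - 1` and is longer than `t`, i.e. `T_n ≤ t - 1 < t < ξ_n`, then
it covers `t` past its first unit of time, so `Z(t) = ξ_n ^ β ≥ t ^ β`. These events are disjoint
in `n`, and since `T_n` and `ξ_n` are independent their total probability is `U(t - 1) t^{-α}`,
where `U(x) = ∑ₙ P(T_n ≤ x)` is the renewal function. Markov's inequality gives
`P(T_n ≤ x) ≥ 1/2` as long as `2 n E[ξ] ≤ x`, so `U` grows at least linearly, and
`E[Z(t)] ≳ t ^ (1 + β - α)`. The regenerative structure is immediate, because the path of `Z` over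
the `n`-th cycle is a fixed measurable function of `ξ_n`.
-/

section RenewalTimes

omit [MeasurableSpace Ω]

variable {ξ : ℕ → Ω → ℝ} {ω : Ω}

lemma rT_zero : rT ξ 0 ω = 0 := by simp [rT]

lemma rT_succ (n : ℕ) : rT ξ (n + 1) ω = rT ξ n ω + ξ n ω := Finset.sum_range_succ _ _

lemma rT_nonneg (h0 : ∀ i, 0 ≤ ξ i ω) (n : ℕ) : 0 ≤ rT ξ n ω :=
  Finset.sum_nonneg fun i _ => h0 i

lemma rT_mono (h0 : ∀ i, 0 ≤ ξ i ω) : Monotone (rT ξ · ω) := fun _ _ h =>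
  Finset.sum_le_sum_of_subset_of_nonneg (Finset.range_subset_range.2 h) fun i _ _ => h0 i

lemma rT_strictMono (hpos : ∀ i, 0 < ξ i ω) : StrictMono (rT ξ · ω) :=
  strictMono_nat_of_lt_succ fun n => by simp only [rT_succ]; linarith [hpos n]

lemma natCast_le_rT (h1 : ∀ i, 1 ≤ ξ i ω) (n : ℕ) : (n : ℝ) ≤ rT ξ n ω := by
  simpa [rT] using Finset.sum_le_sum fun i (_ : i ∈ Finset.range n) => h1 i

lemma tendsto_rT_atTop (h1 : ∀ i, 1 ≤ ξ i ω) : Tendsto (rT ξ · ω) atTop atTop :=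
  tendsto_atTop_mono (natCast_le_rT h1) tendsto_natCast_atTop_atTop

lemma rN_eq_of_rT_le_of_lt (h0 : ∀ i, 0 ≤ ξ i ω) {n : ℕ} {t : ℝ} (hn : rT ξ n ω ≤ t)
    (hlt : t < rT ξ (n + 1) ω) : rN ξ t ω = n := by
  have hset : {m | rT ξ m ω ≤ t} = Iic n := by
    ext m
    refine ⟨fun hm => ?_, fun hm => (rT_mono h0 hm).trans hn⟩
    by_contra! hnm
    simp only [mem_Iic, not_le] at hnm
    exact hlt.not_ge ((rT_mono h0 (Nat.succ_le_of_lt hnm)).trans hm)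
  rw [rN, hset, csSup_Iic]

lemma exists_rT_le_lt (h1 : ∀ i, 1 ≤ ξ i ω) {t : ℝ} (ht : 0 ≤ t) :
    ∃ n, rT ξ n ω ≤ t ∧ t < rT ξ (n + 1) ω := by
  classical
  have hex : ∃ n, t < rT ξ n ω := (tendsto_rT_atTop h1).eventually_gt_atTop t |>.exists
  obtain ⟨n, hn⟩ : ∃ n, Nat.find hex = n + 1 := Nat.exists_eq_succ_of_ne_zero fun h => by
    have := Nat.find_spec hex
    rw [h, rT_zero] at this
    exact ht.not_gt this
  exact ⟨n, not_lt.1 (Nat.find_min hex (by omega)), hn ▸ Nat.find_spec hex⟩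

end RenewalTimes

def cycleIncr (β x : ℝ) : ℝ × (ℝ → ℝ) :=
  (x, fun s => if 1 ≤ s ∧ s < x then x ^ β else 0)

lemma measurable_cycleIncr (β : ℝ) : Measurable (cycleIncr β) := by
  refine measurable_id.prodMk (measurable_pi_lambda _ fun s => ?_)
  by_cases hs : 1 ≤ s
  · simpa only [hs, true_and] using
      Measurable.ite measurableSet_Ioi (measurable_id'.pow_const β) measurable_const
  · simp [hs]

section Step

variable {a c : ℝ}

lemma ite_le_eventuallyEq_nhdsGE (t : ℝ) :
    ∀ᶠ u in 𝓝[≥] t, (if a ≤ u then c else 0) = if a ≤ t then c else 0 := by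
  by_cases h : a ≤ t
  · filter_upwards [self_mem_nhdsWithin] with u hu
    rw [if_pos (h.trans hu), if_pos h]
  · filter_upwards [mem_nhdsWithin_of_mem_nhds (Iio_mem_nhds (not_le.1 h))] with u hu
    rw [if_neg (not_le.2 hu), if_neg h]

lemma exists_ite_le_eventuallyEq_nhdsLT (t : ℝ) :
    ∃ l, ∀ᶠ u in 𝓝[<] t, (if a ≤ u then c else 0) = l := by
  by_cases h : a < t
  · exact ⟨c, by
      filter_upwards [mem_nhdsWithin_of_mem_nhds (Ioi_mem_nhds h)] with u hu using if_pos hu.le⟩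
  · exact ⟨0, by
      filter_upwards [self_mem_nhdsWithin] with u hu using if_neg fun h' => h (h'.trans_lt hu)⟩

end Step

section Path

omit [MeasurableSpace Ω]

variable {ξ : ℕ → Ω → ℝ} {Z : ℝ → Ω → ℝ} {β : ℝ} {ω : Ω}
  (hZ : ∀ t, Z t ω = ξ (rN ξ t ω) ω ^ β * if rT ξ (rN ξ t ω) ω + 1 ≤ t then 1 else 0)
  (h1 : ∀ i, 1 ≤ ξ i ω)
include hZ h1

lemma Z_lt_one {u : ℝ} (hu : u < 1) : Z u ω = 0 := by
  rw [hZ, if_neg, mul_zero]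
  linarith [rT_nonneg (fun i => zero_le_one.trans (h1 i)) (rN ξ u ω)]

lemma Z_eq_of_mem_Ico {n : ℕ} {u : ℝ} (hu : u ∈ Ico (rT ξ n ω) (rT ξ (n + 1) ω)) :
    Z u ω = if rT ξ n ω + 1 ≤ u then ξ n ω ^ β else 0 := by
  rw [hZ, rN_eq_of_rT_le_of_lt (fun i => zero_le_one.trans (h1 i)) hu.1 hu.2]
  split_ifs <;> simp

lemma Z_rT (n : ℕ) : Z (rT ξ n ω) ω = 0 := by
  have hmem : rT ξ n ω ∈ Ico (rT ξ n ω) (rT ξ (n + 1) ω) := by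
    rw [rT_succ]
    exact ⟨le_rfl, by linarith [h1 n]⟩
  rw [Z_eq_of_mem_Ico hZ h1 hmem, if_neg (by linarith)]

lemma rIncr_eq_cycleIncr (n : ℕ) : rIncr ξ Z n ω = cycleIncr β (ξ n ω) := by
  refine Prod.ext rfl (funext fun s => ?_)
  simp only [rIncr, cycleIncr, Z_rT hZ h1, sub_zero]
  rcases lt_or_ge s (ξ n ω) with hs | hs
  · have hclip : min (max s 0) (ξ n ω) = max s 0 :=
      min_eq_left (max_le hs.le (by linarith [h1 n]))
    have hmem : max s 0 + rT ξ n ω ∈ Ico (rT ξ n ω) (rT ξ (n + 1) ω) := by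
      rw [rT_succ]
      constructor <;> linarith [le_max_right s 0, max_lt hs (by linarith [h1 n] : (0:ℝ) < ξ n ω)]
    rw [hclip, Z_eq_of_mem_Ico hZ h1 hmem]
    simp [hs, add_comm (rT ξ n ω), not_le.2 (zero_lt_one (α := ℝ))]
  · rw [min_eq_right (le_max_of_le_left hs), add_comm, ← rT_succ, Z_rT hZ h1,
      if_neg fun h => hs.not_gt h.2]

lemma continuousWithinAt_Z_Ici (t : ℝ) : ContinuousWithinAt (Z · ω) (Ici t) t := by
  refine tendsto_const_nhds.congr' (EventuallyEq.symm ?_)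
  rcases lt_or_ge t 0 with ht | ht
  · filter_upwards [mem_nhdsWithin_of_mem_nhds (Iio_mem_nhds (ht.trans one_pos))] with u hu
    rw [Z_lt_one hZ h1 hu, Z_lt_one hZ h1 (by linarith)]
  obtain ⟨n, hn, hlt⟩ := exists_rT_le_lt h1 ht
  filter_upwards [Ico_mem_nhdsGE hlt, ite_le_eventuallyEq_nhdsGE t] with u hu hstep
  rw [Z_eq_of_mem_Ico hZ h1 ⟨hn.trans hu.1, hu.2⟩, Z_eq_of_mem_Ico hZ h1 ⟨hn, hlt⟩, hstep]

lemma exists_tendsto_Z_nhdsLT {t : ℝ} (ht : 0 < t) :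
    ∃ l, Tendsto (Z · ω) (𝓝[<] t) (𝓝 l) := by
  have hmono := rT_strictMono fun i => zero_lt_one.trans_le (h1 i)
  obtain ⟨n, hn, hle⟩ :=
    hmono.exists_between_of_tendsto_atTop (tendsto_rT_atTop h1) (by rwa [rT_zero])
  obtain ⟨l, hl⟩ := exists_ite_le_eventuallyEq_nhdsLT (a := rT ξ n ω + 1) (c := ξ n ω ^ β) t
  refine ⟨l, tendsto_const_nhds.congr' (EventuallyEq.symm ?_)⟩
  filter_upwards [Ioo_mem_nhdsLT hn, hl] with u hu hstep
  rw [Z_eq_of_mem_Ico hZ h1 ⟨hu.1.le, hu.2.trans_le hle⟩, hstep]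

lemma rpow_le_Z {n : ℕ} {t : ℝ} (hβ : 0 ≤ β) (hn : rT ξ n ω ≤ t - 1) (ht : t < ξ n ω) :
    t ^ β ≤ Z t ω := by
  have h0 := rT_nonneg (fun i => zero_le_one.trans (h1 i)) n
  have hmem : t ∈ Ico (rT ξ n ω) (rT ξ (n + 1) ω) := by
    rw [rT_succ]
    constructor <;> linarith
  rw [Z_eq_of_mem_Ico hZ h1 hmem, if_pos (by linarith)]
  exact Real.rpow_le_rpow (by linarith) ht.le hβ

end Path

lemma lintegral_ofReal_lt_top_of_tail_le {μ : Measure Ω} [IsFiniteMeasure μ] {X : Ω → ℝ}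
    (hX : AEMeasurable X μ) (h0 : 0 ≤ᵐ[μ] X) {α : ℝ} (hα : 1 < α)
    (htail : ∀ t ≥ (1 : ℝ), μ {ω | t < X ω} ≤ ENNReal.ofReal (t ^ (-α))) :
    ∫⁻ ω, ENNReal.ofReal (X ω) ∂μ < ∞ := by
  rw [lintegral_eq_lintegral_meas_lt μ h0 hX, ← Ioc_union_Ioi_eq_Ioi zero_le_one,
    lintegral_union measurableSet_Ioi (Ioc_disjoint_Ioi le_rfl)]
  refine ENNReal.add_lt_top.2 ⟨?_, ?_⟩
  · calc ∫⁻ t in Ioc 0 1, μ {ω | t < X ω} ≤ ∫⁻ _ in Ioc (0 : ℝ) 1, μ univ :=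
          lintegral_mono fun _ => measure_mono (subset_univ _)
      _ < ∞ := by simp [measure_lt_top]
  · calc ∫⁻ t in Ioi 1, μ {ω | t < X ω} ≤ ∫⁻ t in Ioi 1, ‖t ^ (-α)‖ₑ :=
          setLIntegral_mono' measurableSet_Ioi fun t ht =>
            (htail t (le_of_lt ht)).trans (Real.ofReal_le_enorm _)
      _ < ∞ := (integrableOn_Ioi_rpow_of_lt (by linarith) one_pos).2

section Renewal

variable {μ : Measure Ω} {ξ : ℕ → Ω → ℝ}

lemma aemeasurable_rT (hmeas : ∀ i, AEMeasurable (ξ i) μ) (n : ℕ) : AEMeasurable (rT ξ n) μ :=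
  Finset.aemeasurable_fun_sum _ fun i _ => hmeas i

lemma ofReal_mul_meas_lt_rT_le (hident : ∀ i, IdentDistrib (ξ i) (ξ 0) μ μ)
    (h0 : ∀ i ω, 0 ≤ ξ i ω) (n : ℕ) (x : ℝ) :
    ENNReal.ofReal x * μ {ω | x < rT ξ n ω} ≤ n * ∫⁻ ω, ENNReal.ofReal (ξ 0 ω) ∂μ := by
  have hmeas i : AEMeasurable (ξ i) μ := (hident i).aemeasurable_fst
  calc ENNReal.ofReal x * μ {ω | x < rT ξ n ω}
      ≤ ENNReal.ofReal x * μ {ω | ENNReal.ofReal x ≤ ENNReal.ofReal (rT ξ n ω)} := by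
        gcongr ENNReal.ofReal x * μ ?_
        exact fun ω hω => ENNReal.ofReal_le_ofReal (le_of_lt hω)
    _ ≤ ∫⁻ ω, ENNReal.ofReal (rT ξ n ω) ∂μ :=
        mul_meas_ge_le_lintegral₀ (aemeasurable_rT hmeas n).ennreal_ofReal _
    _ = ∑ i ∈ Finset.range n, ∫⁻ ω, ENNReal.ofReal (ξ i ω) ∂μ := by
        simp_rw [rT, ENNReal.ofReal_sum_of_nonneg fun i _ => h0 i _]
        exact lintegral_finsetSum' _ fun i _ => (hmeas i).ennreal_ofReal
    _ = n * ∫⁻ ω, ENNReal.ofReal (ξ 0 ω) ∂μ := by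
        have hi i : ∫⁻ ω, ENNReal.ofReal (ξ i ω) ∂μ = ∫⁻ ω, ENNReal.ofReal (ξ 0 ω) ∂μ :=
          ((hident i).comp ENNReal.measurable_ofReal).lintegral_eq
        simp [hi]

lemma inv_two_le_meas_rT_le [IsProbabilityMeasure μ] (hident : ∀ i, IdentDistrib (ξ i) (ξ 0) μ μ)
    (h0 : ∀ i ω, 0 ≤ ξ i ω) {m : ℝ} (hm : 0 < m)
    (hM : ∫⁻ ω, ENNReal.ofReal (ξ 0 ω) ∂μ ≤ ENNReal.ofReal m) {n : ℕ} {x : ℝ} (hx : 0 ≤ x)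
    (hn : 2 * n * m ≤ x) : 2⁻¹ ≤ μ {ω | rT ξ n ω ≤ x} := by
  rcases Nat.eq_zero_or_pos n with rfl | hn0
  · simp [rT_zero, hx]
  have hxpos : 0 < x := lt_of_lt_of_le (by positivity) hn
  have htail : μ {ω | x < rT ξ n ω} ≤ 2⁻¹ := by
    refine (ENNReal.mul_le_mul_iff_right (by simpa using hxpos) ENNReal.ofReal_ne_top).1 ?_
    calc ENNReal.ofReal x * μ {ω | x < rT ξ n ω}
        ≤ n * ∫⁻ ω, ENNReal.ofReal (ξ 0 ω) ∂μ := ofReal_mul_meas_lt_rT_le hident h0 n x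
      _ ≤ n * ENNReal.ofReal m := by gcongr
      _ = ENNReal.ofReal (n * m) := by
        rw [ENNReal.ofReal_mul (Nat.cast_nonneg n), ENNReal.ofReal_natCast]
      _ ≤ ENNReal.ofReal (x * 2⁻¹) := ENNReal.ofReal_le_ofReal (by linarith)
      _ = ENNReal.ofReal x * 2⁻¹ := by
        rw [ENNReal.ofReal_mul hx, ENNReal.ofReal_inv_of_pos two_pos, ENNReal.ofReal_ofNat]
  have hcover : 1 ≤ μ {ω | rT ξ n ω ≤ x} + μ {ω | x < rT ξ n ω} :=
    calc (1 : ℝ≥0∞) = μ univ := measure_univ.symm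
      _ ≤ μ ({ω | rT ξ n ω ≤ x} ∪ {ω | x < rT ξ n ω}) :=
        measure_mono fun ω _ => le_or_gt (rT ξ n ω) x
      _ ≤ _ := measure_union_le _ _
  rw [← ENNReal.one_sub_inv_two]
  exact tsub_le_iff_right.2 (hcover.trans (add_le_add_right htail _))

def renewalFunction (μ : Measure Ω) (ξ : ℕ → Ω → ℝ) (x : ℝ) : ℝ≥0∞ :=
  ∑' n, μ {ω | rT ξ n ω ≤ x}

lemma ofReal_le_renewalFunction [IsProbabilityMeasure μ]
    (hident : ∀ i, IdentDistrib (ξ i) (ξ 0) μ μ) (h0 : ∀ i ω, 0 ≤ ξ i ω) {m : ℝ} (hm : 0 < m)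
    (hM : ∫⁻ ω, ENNReal.ofReal (ξ 0 ω) ∂μ ≤ ENNReal.ofReal m) {x : ℝ} (hx : 0 ≤ x) :
    ENNReal.ofReal ((x + 1) / (2 * (2 * m + 1))) ≤ renewalFunction μ ξ x := by
  set K := ⌊x / (2 * m)⌋₊
  have hK : x < 2 * m * (K + 1) := by
    have := Nat.lt_floor_add_one (x / (2 * m))
    rwa [div_lt_iff₀ (by positivity), mul_comm] at this
  calc ENNReal.ofReal ((x + 1) / (2 * (2 * m + 1)))
      ≤ ENNReal.ofReal ((K + 1 : ℕ) * 2⁻¹) := by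
        refine ENNReal.ofReal_le_ofReal ?_
        rw [div_le_iff₀ (by positivity)]
        push_cast
        nlinarith [(Nat.cast_nonneg K : (0 : ℝ) ≤ K)]
    _ = ∑ _n ∈ Finset.range (K + 1), 2⁻¹ := by
        rw [ENNReal.ofReal_mul (Nat.cast_nonneg _), ENNReal.ofReal_natCast,
          ENNReal.ofReal_inv_of_pos two_pos, ENNReal.ofReal_ofNat]
        simp
    _ ≤ ∑ n ∈ Finset.range (K + 1), μ {ω | rT ξ n ω ≤ x} := by
        refine Finset.sum_le_sum fun n hn => inv_two_le_meas_rT_le hident h0 hm hM hx ?_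
        have hnK : (n : ℝ) ≤ x / (2 * m) :=
          (Nat.cast_le.2 (Nat.lt_succ_iff.1 (Finset.mem_range.1 hn))).trans
            (Nat.floor_le (by positivity))
        rw [le_div_iff₀ (by positivity)] at hnK
        linarith
    _ ≤ renewalFunction μ ξ x := ENNReal.sum_le_tsum _

lemma meas_rT_le_inter_lt_eq (hindep : iIndepFun ξ μ)
    (hident : ∀ i, IdentDistrib (ξ i) (ξ 0) μ μ) (n : ℕ) (x t : ℝ) :
    μ ({ω | rT ξ n ω ≤ x} ∩ {ω | t < ξ n ω}) = μ {ω | rT ξ n ω ≤ x} * μ {ω | t < ξ 0 ω} := by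
  have hind : IndepFun (∑ j ∈ Finset.range n, ξ j) (ξ n) μ :=
    hindep.indepFun_sum_range_succ₀ (fun i => (hident i).aemeasurable_fst) n
  have htail : μ {ω | t < ξ 0 ω} = μ {ω | t < ξ n ω} :=
    ((hident n).measure_mem_eq measurableSet_Ioi).symm
  rw [htail]
  convert hind.measure_inter_preimage_eq_mul (Iic x) (Ioi t) measurableSet_Iic measurableSet_Ioi
    using 3 <;> ext ω <;> simp [rT, Finset.sum_apply]

end Renewal

lemma ofReal_rpow_mul_renewalFunction_le_lintegral {μ : Measure Ω} {ξ : ℕ → Ω → ℝ}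
    {Z : ℝ → Ω → ℝ} {β : ℝ} (hβ : 0 ≤ β) (hindep : iIndepFun ξ μ)
    (hident : ∀ i, IdentDistrib (ξ i) (ξ 0) μ μ) (hone : ∀ i ω, 1 ≤ ξ i ω)
    (hZ : ∀ t ω, Z t ω = ξ (rN ξ t ω) ω ^ β * if rT ξ (rN ξ t ω) ω + 1 ≤ t then 1 else 0)
    (t : ℝ) :
    ENNReal.ofReal (t ^ β) * (renewalFunction μ ξ (t - 1) * μ {ω | t < ξ 0 ω})
      ≤ ∫⁻ ω, ENNReal.ofReal (Z t ω) ∂μ := by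
  set B : ℕ → Set Ω := fun n => {ω | rT ξ n ω ≤ t - 1} ∩ {ω | t < ξ n ω}
  have h0 i ω : 0 ≤ ξ i ω := zero_le_one.trans (hone i ω)
  have hmeas i : AEMeasurable (ξ i) μ := (hident i).aemeasurable_fst
  have hB n : NullMeasurableSet (B n) μ :=
    (nullMeasurableSet_le (aemeasurable_rT hmeas n) aemeasurable_const).inter
      (nullMeasurableSet_lt aemeasurable_const (hmeas n))
  -- a cycle longer than `t` that starts by time `t - 1` ends after `t`
  have hdisj : Pairwise (Function.onFun Disjoint B) := by
    refine (pairwise_disjoint_on B).2 fun a b hab => disjoint_left.2 fun ω ha hb => ?_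
    have hξa : t < ξ a ω := ha.2
    have hTb : rT ξ b ω ≤ t - 1 := hb.1
    have hab' : rT ξ (a + 1) ω ≤ rT ξ b ω := rT_mono (h0 · ω) hab
    rw [rT_succ] at hab'
    linarith [rT_nonneg (h0 · ω) a]
  calc ENNReal.ofReal (t ^ β) * (renewalFunction μ ξ (t - 1) * μ {ω | t < ξ 0 ω})
      = ENNReal.ofReal (t ^ β) * μ (⋃ n, B n) := by
        rw [measure_iUnion₀ (hdisj.mono fun _ _ h => h.aedisjoint) hB, renewalFunction,
          ← ENNReal.tsum_mul_right]
        simp_rw [B, meas_rT_le_inter_lt_eq hindep hident]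
    _ = ∫⁻ ω, (⋃ n, B n).indicator (fun _ => ENNReal.ofReal (t ^ β)) ω ∂μ :=
        (lintegral_indicator_const₀ (.iUnion hB) _).symm
    _ ≤ ∫⁻ ω, ENNReal.ofReal (Z t ω) ∂μ := by
        refine lintegral_mono (Set.indicator_le fun ω hω => ?_)
        obtain ⟨n, hn, ht⟩ := mem_iUnion.1 hω
        exact ENNReal.ofReal_le_ofReal (rpow_le_Z (hZ · ω) (hone · ω) hβ hn ht)

lemma regenIncrements_of_eq {μ : Measure Ω} {ξ : ℕ → Ω → ℝ} {Z : ℝ → Ω → ℝ} {β : ℝ}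
    (hindep : iIndepFun ξ μ) (hident : ∀ n, IdentDistrib (ξ n) (ξ 0) μ μ)
    (hone : ∀ n ω, 1 ≤ ξ n ω)
    (hZ : ∀ t ω, Z t ω = ξ (rN ξ t ω) ω ^ β * if rT ξ (rN ξ t ω) ω + 1 ≤ t then 1 else 0) :
    RegenIncrements μ ξ Z := by
  have hincr : rIncr ξ Z = fun n ω => cycleIncr β (ξ n ω) :=
    funext₂ fun n ω => rIncr_eq_cycleIncr (hZ · ω) (hone · ω) n
  exact ⟨fun n ω => zero_lt_one.trans_le (hone n ω),
    fun ω => by simpa [rT_zero] using Z_rT (hZ · ω) (hone · ω) 0,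
    fun ω => continuousWithinAt_Z_Ici (hZ · ω) (hone · ω),
    fun ω _ => exists_tendsto_Z_nhdsLT (hZ · ω) (hone · ω),
    hincr ▸ hindep.comp _ fun _ => measurable_cycleIncr β,
    fun n => hincr ▸ (hident n).comp (measurable_cycleIncr β)⟩

lemma exists_ofReal_mul_rpow_lt_lintegral {μ : Measure Ω} [IsProbabilityMeasure μ]
    {ξ : ℕ → Ω → ℝ} {Z : ℝ → Ω → ℝ} {α β : ℝ} (hα : 1 < α) (hβ : 0 ≤ β)
    (hindep : iIndepFun ξ μ) (hident : ∀ n, IdentDistrib (ξ n) (ξ 0) μ μ)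
    (hone : ∀ n ω, 1 ≤ ξ n ω)
    (hpareto : ∀ t ≥ (1 : ℝ), μ {ω | t < ξ 0 ω} = ENNReal.ofReal (t ^ (-α)))
    (hZ : ∀ t ω, Z t ω = ξ (rN ξ t ω) ω ^ β * if rT ξ (rN ξ t ω) ω + 1 ≤ t then 1 else 0) :
    ∃ c > (0 : ℝ), ∀ t ≥ (1 : ℝ),
      ENNReal.ofReal (c * t ^ (1 + β - α)) < ∫⁻ ω, ENNReal.ofReal (Z t ω) ∂μ := by
  have h0 i ω : 0 ≤ ξ i ω := zero_le_one.trans (hone i ω)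
  have hM : ∫⁻ ω, ENNReal.ofReal (ξ 0 ω) ∂μ < ∞ :=
    lintegral_ofReal_lt_top_of_tail_le (hident 0).aemeasurable_fst (ae_of_all _ (h0 0)) hα
      fun t ht => (hpareto t ht).le
  set m := (∫⁻ ω, ENNReal.ofReal (ξ 0 ω) ∂μ).toReal + 1
  have hm : 0 < m := by positivity
  have hMm : ∫⁻ ω, ENNReal.ofReal (ξ 0 ω) ∂μ ≤ ENNReal.ofReal m :=
    (ENNReal.le_ofReal_iff_toReal_le hM.ne hm.le).2 (by linarith)
  refine ⟨(4 * (2 * m + 1))⁻¹, by positivity, fun t ht => ?_⟩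
  have ht0 : 0 < t := by linarith
  calc ENNReal.ofReal ((4 * (2 * m + 1))⁻¹ * t ^ (1 + β - α))
      < ENNReal.ofReal (t ^ β) *
          (ENNReal.ofReal ((t - 1 + 1) / (2 * (2 * m + 1))) * ENNReal.ofReal (t ^ (-α))) := by
        rw [← ENNReal.ofReal_mul (by positivity), ← ENNReal.ofReal_mul (by positivity),
          ENNReal.ofReal_lt_ofReal_iff (by positivity), sub_add_cancel, sub_eq_add_neg,
          Real.rpow_add ht0, Real.rpow_add ht0, Real.rpow_one]
        have : 0 < t * t ^ β * t ^ (-α) := by positivity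
        field_simp
        nlinarith
    _ ≤ ENNReal.ofReal (t ^ β) * (renewalFunction μ ξ (t - 1) * μ {ω | t < ξ 0 ω}) := by
        rw [hpareto t ht]
        gcongr
        exact ofReal_le_renewalFunction hident h0 hm hMm (sub_nonneg.2 ht)
    _ ≤ ∫⁻ ω, ENNReal.ofReal (Z t ω) ∂μ :=
        ofReal_rpow_mul_renewalFunction_le_lintegral hβ hindep hident hone hZ t

theorem stmt17_general (μ : Measure Ω) [IsProbabilityMeasure μ] (ξ : ℕ → Ω → ℝ) (Z : ℝ → Ω → ℝ)
    (α β : ℝ) (hα : 1 < α) (hβ : 0 < β)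
    (hindep : iIndepFun ξ μ)
    (hident : ∀ n, IdentDistrib (ξ n) (ξ 0) μ μ)
    (hone : ∀ n ω, 1 ≤ ξ n ω)
    (hpareto : ∀ t ≥ (1:ℝ), μ {ω | t < ξ 0 ω} = ENNReal.ofReal (t ^ (-α)))
    (hZ : ∀ t ω, Z t ω =
      (ξ (rN ξ t ω) ω) ^ β * (if rT ξ (rN ξ t ω) ω + 1 ≤ t then 1 else 0)) :
    RegenIncrements μ ξ Z ∧ (∀ n ω, Z (rT ξ n ω) ω = 0) ∧
      ∃ c > (0:ℝ), ∀ t ≥ (1:ℝ),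
        ENNReal.ofReal (c * t ^ (1 + β - α)) < ∫⁻ ω, ENNReal.ofReal (Z t ω) ∂μ :=
  ⟨regenIncrements_of_eq hindep hident hone hZ, fun n ω => Z_rT (hZ · ω) (hone · ω) n,
    exists_ofReal_mul_rpow_lt_lintegral hα hβ.le hindep hident hone hpareto hZ⟩

/-- sharpness example: i.i.d. Pareto interarrival times with tail `t^{−α}`
(`α > 1`), and `Z(t) = ξ_{τ(t)}^β · 1{t ≥ T_{N(t)} + 1}`. Then `Z` has regenerative
increments over `T_n`, vanishes at the renewal times (so `a = 0`), and
`E[Z(t)] > c t^{1+β−α}` for some `c > 0` and all `t ≥ 1` (stated via the lower Lebesgue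
integral, since `E[Z(t)]` may be infinite). -/
theorem stmt17 (μ : Measure Ω) [IsProbabilityMeasure μ] (ξ : ℕ → Ω → ℝ) (Z : ℝ → Ω → ℝ)
    (α β : ℝ) (hα : 1 < α) (hβ : 0 < β) (hrange : 1 + β - α < 1)
    (hindep : iIndepFun ξ μ)
    (hident : ∀ n, IdentDistrib (ξ n) (ξ 0) μ μ)
    (hone : ∀ n ω, 1 ≤ ξ n ω)
    (hpareto : ∀ t ≥ (1:ℝ), μ {ω | t < ξ 0 ω} = ENNReal.ofReal (t ^ (-α)))
    (hZ : ∀ t ω, Z t ω =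
      (ξ (rN ξ t ω) ω) ^ β * (if rT ξ (rN ξ t ω) ω + 1 ≤ t then 1 else 0)) :
    RegenIncrements μ ξ Z ∧ (∀ n ω, Z (rT ξ n ω) ω = 0) ∧
      ∃ c > (0:ℝ), ∀ t ≥ (1:ℝ),
        ENNReal.ofReal (c * t ^ (1 + β - α)) < ∫⁻ ω, ENNReal.ofReal (Z t ω) ∂μ :=
  stmt17_general μ ξ Z α β hα hβ hindep hident hone hpareto hZ
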